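/- arXiv:1207.7270 — 7 statements merged into one kernel-verified Lean document; each statement's English description precedes it below -/
import Mathlib

section
/- Let (X,d) and (Y,e) be metric spaces, D ⊆ X, θ : D → Y, and let A ⊆ X, B ⊆ Y be dense subsets. If there exists an A,B-approximation system S for θ, then θ is continuous on D. -/
def IsApproxSystem {X Y : Type*} [MetricSpace X] [MetricSpace Y]
    (A : Set X) (B : Set Y) (D : Set X) (θ : X → Y)
    (S : Set (X × ℕ × Y × ℕ)) : Prop :=
  (∀ p ∈ S, p.1 ∈ A ∧ p.2.2.1 ∈ B) ∧
  ∀ ξ ∈ D,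
    (∀ (a : X) (m : ℕ) (b : Y) (n : ℕ), (a, m, b, n) ∈ S →
      dist a ξ < 1 / (m + 1) → dist b (θ ξ) < 1 / (n + 1)) ∧
    (∀ n : ℕ, ∃ m : ℕ, ∀ a ∈ A, dist a ξ < 1 / (m + 1) →
      ∃ b ∈ B, (a, m, b, n) ∈ S)

/-!
Fix `ξ ∈ D` and `n`, and let `m` be given by condition (2) at `ξ`. By density of `A` there is
`a ∈ A` within half of `1/(m+1)` of `ξ`; then every `η` within that same distance of `ξ` is within
`1/(m+1)` of `a`. Condition (2) yields `b` with `(a, m, b, n) ∈ S`, and condition (1), applied at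
`ξ` and at `η`, puts `θ ξ` and `θ η` both within `1/(n+1)` of `b`.
-/

namespace IsApproxSystem

variable {X Y : Type*} [MetricSpace X] [MetricSpace Y] {A : Set X} {B : Set Y} {D : Set X}
  {θ : X → Y} {S : Set (X × ℕ × Y × ℕ)}

theorem dist_apply_lt_of_mem (hS : IsApproxSystem A B D θ S) {ξ η : X} (hξ : ξ ∈ D)
    (hη : η ∈ D) {a : X} {m : ℕ} {b : Y} {n : ℕ} (habS : (a, m, b, n) ∈ S)
    (haξ : dist a ξ < 1 / (m + 1)) (haη : dist a η < 1 / (m + 1)) :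
    dist (θ η) (θ ξ) < 2 / (n + 1) := by
  have hbξ : dist b (θ ξ) < 1 / (n + 1) := (hS.2 ξ hξ).1 a m b n habS haξ
  have hbη : dist b (θ η) < 1 / (n + 1) := (hS.2 η hη).1 a m b n habS haη
  calc dist (θ η) (θ ξ) ≤ dist b (θ η) + dist b (θ ξ) := dist_triangle_left _ _ _
    _ < 1 / (n + 1) + 1 / (n + 1) := add_lt_add hbη hbξ
    _ = 2 / (n + 1) := by ring

theorem exists_pos_forall_dist_apply_lt (hA : Dense A) (hS : IsApproxSystem A B D θ S)
    {ξ : X} (hξ : ξ ∈ D) (n : ℕ) :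
    ∃ δ > 0, ∀ η ∈ D, dist η ξ < δ → dist (θ η) (θ ξ) < 2 / (n + 1) := by
  obtain ⟨m, hm⟩ := (hS.2 ξ hξ).2 n
  set r : ℝ := 1 / (m + 1)
  have hr₀ : 0 < r / 2 := by positivity
  obtain ⟨a, haξ : dist a ξ < r / 2, haA⟩ := Metric.dense_iff.mp hA ξ (r / 2) hr₀
  have haξ' : dist a ξ < r := haξ.trans (half_lt_self (by positivity))
  obtain ⟨b, -, habS⟩ := hm a haA haξ'
  refine ⟨r / 2, hr₀, fun η hη hηξ => hS.dist_apply_lt_of_mem hξ hη habS haξ' ?_⟩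
  calc dist a η ≤ dist a ξ + dist η ξ := dist_triangle_right _ _ _
    _ < r / 2 + r / 2 := add_lt_add haξ hηξ
    _ = r := add_halves r

end IsApproxSystem

theorem approx_system_implies_continuousOn_general
    {X Y : Type*} [MetricSpace X] [MetricSpace Y]
    (A : Set X) (B : Set Y) (hA : Dense A)
    (D : Set X) (θ : X → Y) (S : Set (X × ℕ × Y × ℕ))
    (hS : IsApproxSystem A B D θ S) :
    ContinuousOn θ D := by
  refine Metric.continuousOn_iff.mpr fun ξ hξ ε hε => ?_
  obtain ⟨n, hn⟩ := exists_nat_one_div_lt (half_pos hε)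
  obtain ⟨δ, hδ, hθ⟩ := hS.exists_pos_forall_dist_apply_lt hA hξ n
  refine ⟨δ, hδ, fun η hη hηξ => (hθ η hη hηξ).trans_le ?_⟩
  calc (2 : ℝ) / (n + 1) = 2 * (1 / (n + 1)) := by ring
    _ ≤ ε := by linarith

theorem approx_system_implies_continuousOn
    {X Y : Type*} [MetricSpace X] [MetricSpace Y]
    (A : Set X) (B : Set Y) (hA : Dense A) (hB : Dense B)
    (D : Set X) (θ : X → Y) (S : Set (X × ℕ × Y × ℕ))
    (hS : IsApproxSystem A B D θ S) :
    ContinuousOn θ D :=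
  approx_system_implies_continuousOn_general A B hA D θ S hS
end

section
/- Let (X,d) and (Y,e) be metric spaces, D ⊆ X, θ : D → Y continuous on D, and let A ⊆ X, B ⊆ Y be dense subsets. Then the set S of all (a,m,b,n) ∈ A × ℕ × B × ℕ satisfying: for all ξ ∈ D, d(a,ξ) < 1/(m+1) implies e(b,θ(ξ)) < 1/(n+1), is an A,B-approximation system for θ. -/
/-- Take `b ∈ B` near `θ ξ`; a point `ζ ∈ D` that shares a `δ`-close point `a` with `ξ` is
`2δ`-close to `ξ`, so continuity at `ξ` keeps `θ ζ` near `b`. -/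
lemma ContinuousWithinAt.exists_mem_dense_forall_dist_lt {X Y : Type*} [PseudoMetricSpace X]
    [PseudoMetricSpace Y] {B : Set Y} (hB : Dense B) {D : Set X} {θ : X → Y} {ξ : X}
    (hθ : ContinuousWithinAt θ D ξ) {ε : ℝ} (hε : 0 < ε) :
    ∃ b ∈ B, ∃ δ > 0, ∀ a, dist a ξ < δ → ∀ ζ ∈ D, dist a ζ < δ → dist b (θ ζ) < ε := by
  obtain ⟨δ, hδ, hθδ⟩ := Metric.continuousWithinAt_iff.mp hθ (ε / 2) (half_pos hε)
  obtain ⟨b, hbξ, hbB⟩ := Metric.dense_iff.mp hB (θ ξ) (ε / 2) (half_pos hε)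
  refine ⟨b, hbB, δ / 2, half_pos hδ, fun a haξ ζ hζ haζ => ?_⟩
  have hζξ : dist ζ ξ < δ := by
    linarith [dist_triangle_left ζ ξ a]
  calc dist b (θ ζ) ≤ dist b (θ ξ) + dist (θ ζ) (θ ξ) := dist_triangle_right _ _ _
    _ < ε / 2 + ε / 2 := add_lt_add (Metric.mem_ball.mp hbξ) (hθδ hζ hζξ)
    _ = ε := add_halves ε

theorem maximal_set_is_approx_system_general
    {X Y : Type*} [MetricSpace X] [MetricSpace Y]
    (A : Set X) (B : Set Y) (hB : Dense B)
    (D : Set X) (θ : X → Y) (hθ : ContinuousOn θ D) :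
    IsApproxSystem A B D θ
      {p : X × ℕ × Y × ℕ | p.1 ∈ A ∧ p.2.2.1 ∈ B ∧
        ∀ ξ ∈ D, dist p.1 ξ < 1 / (p.2.1 + 1) →
          dist p.2.2.1 (θ ξ) < 1 / (p.2.2.2 + 1)} := by
  refine ⟨fun p hp => ⟨hp.1, hp.2.1⟩, fun ξ hξ => ⟨fun a m b n hS => hS.2.2 ξ hξ, fun n => ?_⟩⟩
  obtain ⟨b, hbB, δ, hδ, hb⟩ :=
    (hθ ξ hξ).exists_mem_dense_forall_dist_lt hB (Nat.one_div_pos_of_nat (n := n))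
  obtain ⟨m, hm⟩ := exists_nat_one_div_lt hδ
  exact ⟨m, fun a haA haξ =>
    ⟨b, hbB, haA, hbB, fun ζ hζ haζ => hb a (haξ.trans hm) ζ hζ (haζ.trans hm)⟩⟩

theorem maximal_set_is_approx_system
    {X Y : Type*} [MetricSpace X] [MetricSpace Y]
    (A : Set X) (B : Set Y) (hA : Dense A) (hB : Dense B)
    (D : Set X) (θ : X → Y) (hθ : ContinuousOn θ D) :
    IsApproxSystem A B D θ
      {p : X × ℕ × Y × ℕ | p.1 ∈ A ∧ p.2.2.1 ∈ B ∧
        ∀ ξ ∈ D, dist p.1 ξ < 1 / (p.2.1 + 1) →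
          dist p.2.2.1 (θ ξ) < 1 / (p.2.2.2 + 1)} :=
  maximal_set_is_approx_system_general A B hB D θ hθ
end

section
/- Let X = ℝ², equipped with the sup metric d((ξ₁,ξ₂),(ξ₁',ξ₂')) = max(|ξ₁−ξ₁'|,|ξ₂−ξ₂'|), let Y = ℝ with the usual metric, D = ℝ × (ℝ \ {0}), and θ(ξ₁,ξ₂) = ξ₁/ξ₂. Let S be the set of all ((a₁,a₂),m,b,n) ∈ ℚ² × ℕ × ℚ × ℕ such that a₂·b = a₁ and (m+1)·|a₂| ≥ 1 + (n+1)·(|b|+1). Then S is a ℚ²,ℚ-approximation system for θ. -/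
/-!
If `(a₁, a₂)` is `ε`-close to `ξ` and `a₂ b = a₁`, then `b - ξ₁ / ξ₂ = (b (ξ₂ - a₂) + (a₁ - ξ₁)) / ξ₂`:
the numerator is below `(|b| + 1) ε`, while the size condition on `a₂` keeps `|ξ₂|` above
`(n + 1) (|b| + 1) ε`. Conversely, near a point with `ξ₂ ≠ 0` the quotient `q₁ / q₂` is bounded and
`|q₂|` stays above `|ξ₂| / 2`, so for large `m` every rational point `1 / (m + 1)`-close to `ξ`
meets the size condition with `b = q₁ / q₂`.
-/

open Filter Topology

section

variable {K : Type*} [Field K] [LinearOrder K] [IsStrictOrderedRing K]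

theorem abs_mul_sub_lt_of_abs_sub_lt {a₁ a₂ b x₁ x₂ ε : K} (hab : a₂ * b = a₁)
    (h₁ : |a₁ - x₁| < ε) (h₂ : |a₂ - x₂| < ε) : |b * x₂ - x₁| < (|b| + 1) * ε :=
  calc |b * x₂ - x₁| = |b * (x₂ - a₂) + (a₁ - x₁)| := by rw [← hab]; ring_nf
    _ ≤ |b| * |x₂ - a₂| + |a₁ - x₁| := (abs_add_le _ _).trans_eq (by rw [abs_mul])
    _ < (|b| + 1) * ε := by
      rw [abs_sub_comm] at h₂
      nlinarith [abs_nonneg b, abs_nonneg (x₂ - a₂)]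

theorem abs_sub_div_lt_one_div {a₁ a₂ b x₁ x₂ ε N : K} (hN : 0 < N) (hab : a₂ * b = a₁)
    (h₁ : |a₁ - x₁| < ε) (h₂ : |a₂ - x₂| < ε) (ha₂ : ε * (1 + N * (|b| + 1)) ≤ |a₂|) :
    |b - x₁ / x₂| < 1 / N := by
  have hnum := abs_mul_sub_lt_of_abs_sub_lt hab h₁ h₂
  have hden : N * ((|b| + 1) * ε) < |x₂| := by
    have := abs_sub_abs_le_abs_sub a₂ x₂
    linarith
  have hε : 0 < ε := (abs_nonneg _).trans_lt h₁
  have hx₂ : 0 < |x₂| := lt_of_le_of_lt (by positivity) hden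
  calc |b - x₁ / x₂| = |b * x₂ - x₁| / |x₂| := by
        rw [← abs_div, sub_div, mul_div_cancel_right₀ _ (abs_pos.1 hx₂)]
    _ < 1 / N := by
      rw [div_lt_div_iff₀ hx₂ hN]
      nlinarith

end

theorem eventually_abs_snd_gt_and_abs_div_lt {ξ : ℝ × ℝ} (hξ : ξ.2 ≠ 0) :
    ∀ᶠ p : ℝ × ℝ in 𝓝 ξ, |ξ.2| / 2 < |p.2| ∧ |p.1 / p.2| < |ξ.1 / ξ.2| + 1 :=
  (continuous_snd.abs.tendsto ξ |>.eventually_const_lt (half_lt_self (abs_pos.2 hξ))).and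
    ((continuousAt_fst.div continuousAt_snd hξ).abs.eventually_lt_const (lt_add_one _))

theorem exists_nat_one_add_mul_le_of_dist_lt {ξ : ℝ × ℝ} (hξ : ξ.2 ≠ 0) {c : ℝ} (hc : 0 ≤ c) :
    ∃ m : ℕ, ∀ p : ℝ × ℝ, dist p ξ < 1 / (m + 1) →
      p.2 ≠ 0 ∧ 1 + c * (|p.1 / p.2| + 1) ≤ (m + 1) * |p.2| := by
  obtain ⟨r, hr, hball⟩ := Metric.eventually_nhds_iff.1 (eventually_abs_snd_gt_and_abs_div_lt hξ)
  have hsmall : ∀ᶠ m : ℕ in atTop, 1 / ((m : ℝ) + 1) < r :=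
    tendsto_one_div_add_atTop_nhds_zero_nat.eventually_lt_const hr
  have hlarge : ∀ᶠ m : ℕ in atTop, 1 + c * (|ξ.1 / ξ.2| + 2) ≤ ((m : ℝ) + 1) * (|ξ.2| / 2) :=
    (tendsto_atTop_add_const_right _ 1 tendsto_natCast_atTop_atTop |>.atTop_mul_const
      (half_pos (abs_pos.2 hξ))).eventually_ge_atTop _
  obtain ⟨m, hm_small, hm_large⟩ := (hsmall.and hlarge).exists
  refine ⟨m, fun p hp => ?_⟩
  obtain ⟨hp₂, hp_div⟩ := hball (hp.trans hm_small)
  refine ⟨abs_pos.1 ((by positivity : (0 : ℝ) ≤ |ξ.2| / 2).trans_lt hp₂), ?_⟩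
  calc 1 + c * (|p.1 / p.2| + 1) ≤ 1 + c * (|ξ.1 / ξ.2| + 2) := by gcongr 1 + c * ?_; linarith
    _ ≤ ((m : ℝ) + 1) * (|ξ.2| / 2) := hm_large
    _ ≤ (m + 1) * |p.2| := by gcongr

theorem division_approx_system :
    IsApproxSystem
      (A := {p : ℝ × ℝ | ∃ q₁ q₂ : ℚ, p = ((q₁ : ℝ), (q₂ : ℝ))})
      (B := Set.range ((↑) : ℚ → ℝ))
      (D := {p : ℝ × ℝ | p.2 ≠ 0})
      (θ := fun p => p.1 / p.2)
      {q : (ℝ × ℝ) × ℕ × ℝ × ℕ | ∃ a₁ a₂ b : ℚ,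
        q.1 = ((a₁ : ℝ), (a₂ : ℝ)) ∧ q.2.2.1 = (b : ℝ) ∧
        a₂ * b = a₁ ∧ ((q.2.1 : ℚ) + 1) * |a₂| ≥ 1 + ((q.2.2.2 : ℚ) + 1) * (|b| + 1)} := by
  refine ⟨?_, fun ξ hξ => ⟨?_, fun n => ?_⟩⟩
  · rintro ⟨-, -, -, -⟩ ⟨a₁, a₂, b, rfl, rfl, -, -⟩
    exact ⟨⟨a₁, a₂, rfl⟩, b, rfl⟩
  · rintro - m - n ⟨a₁, a₂, b, rfl, rfl, hab, hbig⟩ hdist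
    rw [Prod.dist_eq, max_lt_iff] at hdist
    dsimp only at hbig hdist ⊢
    have hbigℝ : 1 + ((n : ℝ) + 1) * (|(b : ℝ)| + 1) ≤ ((m : ℝ) + 1) * |(a₂ : ℝ)| := by
      exact_mod_cast hbig
    refine abs_sub_div_lt_one_div (by positivity) (by exact_mod_cast hab) hdist.1 hdist.2 ?_
    rw [div_mul_eq_mul_div, one_mul, div_le_iff₀ (by positivity)]
    linarith
  · obtain ⟨m, hm⟩ := exists_nat_one_add_mul_le_of_dist_lt hξ (c := (n : ℝ) + 1) (by positivity)
    refine ⟨m, ?_⟩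
    rintro - ⟨q₁, q₂, rfl⟩ hdist
    obtain ⟨hq₂, hbound⟩ := hm _ hdist
    dsimp only at hq₂ hbound ⊢
    refine ⟨_, ⟨q₁ / q₂, rfl⟩, q₁, q₂, q₁ / q₂, rfl, rfl,
      mul_div_cancel₀ _ (by exact_mod_cast hq₂), ?_⟩
    exact_mod_cast hbound
end

section
/- Let (ξ₁,ξ₂) ∈ ℝ × (ℝ \ {0}), and let (a₁,a₂) ∈ ℚ², b ∈ ℚ, m,n ∈ ℕ satisfy a₂·b = a₁, (m+1)·|a₂| ≥ 1 + (n+1)·(|b|+1), |a₁−ξ₁| < 1/(m+1), and |a₂−ξ₂| < 1/(m+1). Then |b − ξ₁/ξ₂| < 1/(n+1). -/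
/-!
Write `b - ξ₁ / ξ₂ = (b (ξ₂ - a₂) + (a₁ - ξ₁)) / ξ₂`. With both input errors below `ε`, the
numerator is at most `ε (|b| + 1)`, while the denominator satisfies `|ξ₂| > |a₂| - ε`; the
hypothesis on `|a₂|` is exactly what makes `|ξ₂|` exceed `ε (|b| + 1) / δ`.
-/

section

variable {K : Type*} [Field K]

theorem sub_div_eq_of_mul_eq {a₁ a₂ b ξ₁ ξ₂ : K} (hab : a₂ * b = a₁) (hξ₂ : ξ₂ ≠ 0) :
    b - ξ₁ / ξ₂ = (b * (ξ₂ - a₂) + (a₁ - ξ₁)) / ξ₂ := by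
  rw [eq_div_iff hξ₂, ← hab]
  field_simp
  ring

variable [LinearOrder K] [IsStrictOrderedRing K]

theorem abs_mul_sub_add_sub_le {a₁ a₂ b ξ₁ ξ₂ ε : K} (h₁ : |a₁ - ξ₁| ≤ ε)
    (h₂ : |a₂ - ξ₂| ≤ ε) : |b * (ξ₂ - a₂) + (a₁ - ξ₁)| ≤ ε * (|b| + 1) :=
  calc |b * (ξ₂ - a₂) + (a₁ - ξ₁)| ≤ |b| * |a₂ - ξ₂| + |a₁ - ξ₁| := by
        simpa only [abs_mul, abs_sub_comm ξ₂] using abs_add_le (b * (ξ₂ - a₂)) (a₁ - ξ₁)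
    _ ≤ |b| * ε + ε := by gcongr
    _ = ε * (|b| + 1) := by ring

theorem abs_sub_div_lt_of_abs_sub_lt {a₁ a₂ b ξ₁ ξ₂ ε δ : K} (hab : a₂ * b = a₁) (hδ : 0 < δ)
    (hge : ε * (1 + (|b| + 1) / δ) ≤ |a₂|) (h₁ : |a₁ - ξ₁| < ε) (h₂ : |a₂ - ξ₂| < ε) :
    |b - ξ₁ / ξ₂| < δ := by
  have hε : 0 < ε := (abs_nonneg _).trans_lt h₁
  have hξ₂ : ε * (|b| + 1) / δ < |ξ₂| := by
    have := abs_sub_abs_le_abs_sub a₂ ξ₂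
    rw [mul_div_assoc]
    linarith [mul_add ε 1 ((|b| + 1) / δ)]
  have hξ₂_pos : 0 < |ξ₂| := lt_of_le_of_lt (by positivity) hξ₂
  rw [sub_div_eq_of_mul_eq hab (abs_pos.mp hξ₂_pos), abs_div, div_lt_iff₀ hξ₂_pos]
  calc |b * (ξ₂ - a₂) + (a₁ - ξ₁)| ≤ ε * (|b| + 1) := abs_mul_sub_add_sub_le h₁.le h₂.le
    _ = δ * (ε * (|b| + 1) / δ) := (mul_div_cancel₀ _ hδ.ne').symm
    _ < δ * |ξ₂| := mul_lt_mul_of_pos_left hξ₂ hδ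

end

theorem division_soundness_general (ξ₁ ξ₂ : ℝ)
    (a₁ a₂ b : ℚ) (m n : ℕ)
    (hab : a₂ * b = a₁)
    (hge : ((m : ℚ) + 1) * |a₂| ≥ 1 + ((n : ℚ) + 1) * (|b| + 1))
    (h1 : |(a₁ : ℝ) - ξ₁| < 1 / (m + 1))
    (h2 : |(a₂ : ℝ) - ξ₂| < 1 / (m + 1)) :
    |(b : ℝ) - ξ₁ / ξ₂| < 1 / (n + 1) := by
  have hgeR : 1 + ((n : ℝ) + 1) * (|(b : ℝ)| + 1) ≤ ((m : ℝ) + 1) * |(a₂ : ℝ)| := by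
    exact_mod_cast hge
  refine abs_sub_div_lt_of_abs_sub_lt (a₂ := (a₂ : ℝ)) (by exact_mod_cast hab)
    (by positivity) ?_ h1 h2
  rw [div_div_eq_mul_div, div_one, one_div_mul_eq_div, div_le_iff₀ (by positivity)]
  linarith

theorem division_soundness (ξ₁ ξ₂ : ℝ) (hξ₂ : ξ₂ ≠ 0)
    (a₁ a₂ b : ℚ) (m n : ℕ)
    (hab : a₂ * b = a₁)
    (hge : ((m : ℚ) + 1) * |a₂| ≥ 1 + ((n : ℚ) + 1) * (|b| + 1))
    (h1 : |(a₁ : ℝ) - ξ₁| < 1 / (m + 1))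
    (h2 : |(a₂ : ℝ) - ξ₂| < 1 / (m + 1)) :
    |(b : ℝ) - ξ₁ / ξ₂| < 1 / (n + 1) :=
  division_soundness_general ξ₁ ξ₂ a₁ a₂ b m n hab hge h1 h2
end

section
/- For k ∈ ℕ let S_k be the set of all (a,m,b,n) ∈ ℚ × ℕ × ℚ × ℕ such that a² ≤ (2k+1)(2k+2) and |b − σ_k(a)| + a^{2k}/(2·(2k)!) + 1/(m+1) ≤ 1/(n+1), where σ_k(a) = (−1)^k · a^{2k}/(2·(2k)!) + Σ_{i<k} (−1)^i · a^{2i}/(2i)!. Then ⋃_{k∈ℕ} S_k is a ℚ,ℚ-approximation system for the cosine function cos : ℝ → ℝ. -/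
noncomputable def sigmaCos (k : ℕ) (a : ℚ) : ℝ :=
  (-1 : ℝ) ^ k * (a : ℝ) ^ (2 * k) / (2 * (2 * k).factorial) +
    ∑ i ∈ Finset.range k, (-1 : ℝ) ^ i * (a : ℝ) ^ (2 * i) / (2 * i).factorial

/-!
For `x² ≤ (2k+1)(2k+2)` the terms of the cosine series from index `k` on decrease in absolute
value, so by the alternating series test `cos x` lies between the partial sums `∑_{i<k}` and
`∑_{i≤k}`; `sigmaCos k x` is their midpoint, hence within half the `k`-th term of `cos x`.
Together with `|cos a - cos ξ| ≤ |a - ξ|` this makes every tuple of the system sound. For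
completeness, given a rational `a`, both the constraint on `k` and smallness of the `k`-th term
hold for all large `k`, and `b` is any rational close enough to `sigmaCos k a`.
-/

open Filter Finset Real Nat Topology

theorem Antitone.hasSum_alternating_mem_Icc {g : ℕ → ℝ} {s : ℝ} (hg : Antitone g)
    (hs : HasSum (fun n ↦ (-1) ^ n * g n) s) : s ∈ Set.Icc 0 (g 0) := by
  have h := hs.tendsto_sum_nat
  simpa using
    And.intro (hg.alternating_series_le_tendsto h 0) (hg.tendsto_le_alternating_series h 0)

theorem HasSum.abs_sub_alternating_midpoint_le {g : ℕ → ℝ} {s : ℝ} (k : ℕ)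
    (hs : HasSum (fun n ↦ (-1) ^ n * g n) s) (hg : Antitone fun n ↦ g (n + k)) :
    |s - (∑ i ∈ range k, (-1) ^ i * g i + (-1) ^ k * g k / 2)| ≤ g k / 2 := by
  have hsq : ((-1 : ℝ) ^ k) ^ 2 = 1 := by rw [← pow_mul, pow_mul']; norm_num
  have htail := ((hasSum_nat_add_iff' k).2 hs).mul_left ((-1) ^ k)
  rw [show (fun n ↦ (-1) ^ k * ((-1) ^ (n + k) * g (n + k))) = fun n ↦ (-1) ^ n * g (n + k)
    from funext fun n ↦ by linear_combination (-1) ^ n * g (n + k) * hsq] at htail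
  obtain ⟨h0, h1⟩ := hg.hasSum_alternating_mem_Icc htail
  rw [Nat.zero_add] at h1
  have hmid : s - (∑ i ∈ range k, (-1) ^ i * g i + (-1) ^ k * g k / 2) =
      (-1) ^ k * ((-1) ^ k * (s - ∑ i ∈ range k, (-1) ^ i * g i) - g k / 2) := by
    linear_combination (∑ i ∈ range k, (-1) ^ i * g i - s) * hsq
  rw [hmid, abs_mul, abs_neg_one_pow, one_mul, abs_le]
  constructor <;> linarith

theorem pow_two_mul_succ_div_factorial (x : ℝ) (j : ℕ) :
    x ^ (2 * (j + 1)) / (2 * (j + 1))! =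
      x ^ (2 * j) / (2 * j)! * (x ^ 2 / ((2 * j + 1) * (2 * j + 2))) := by
  rw [show 2 * (j + 1) = 2 * j + 1 + 1 by ring, Nat.factorial_succ, Nat.factorial_succ]
  push_cast
  field_simp
  ring

theorem antitone_pow_two_mul_div_factorial {x : ℝ} {k : ℕ}
    (hx : x ^ 2 ≤ (2 * k + 1) * (2 * k + 2)) :
    Antitone fun n ↦ x ^ (2 * (n + k)) / (2 * (n + k))! := by
  refine antitone_nat_of_succ_le fun n ↦ ?_
  have hratio : x ^ 2 / ((2 * (n + k : ℕ) + 1) * (2 * (n + k : ℕ) + 2)) ≤ 1 := by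
    rw [div_le_one (by positivity)]
    refine hx.trans ?_
    push_cast
    gcongr <;> simp
  rw [add_right_comm, pow_two_mul_succ_div_factorial]
  exact mul_le_of_le_one_right (by rw [pow_mul]; positivity) hratio

theorem abs_cos_sub_taylor_midpoint_le {x : ℝ} {k : ℕ}
    (hx : x ^ 2 ≤ (2 * k + 1) * (2 * k + 2)) :
    |cos x - ((-1) ^ k * x ^ (2 * k) / (2 * (2 * k)!) +
      ∑ i ∈ range k, (-1) ^ i * x ^ (2 * i) / (2 * i)!)| ≤ x ^ (2 * k) / (2 * (2 * k)!) := by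
  have hs : HasSum (fun n ↦ (-1) ^ n * (x ^ (2 * n) / (2 * n)!)) (cos x) := by
    simpa only [mul_div_assoc] using hasSum_cos x
  have := hs.abs_sub_alternating_midpoint_le k (antitone_pow_two_mul_div_factorial hx)
  simp only [mul_div_assoc, div_div] at this ⊢
  rwa [add_comm, mul_comm (2 : ℝ)]

theorem tendsto_pow_two_mul_div_factorial (x : ℝ) :
    Tendsto (fun k : ℕ ↦ x ^ (2 * k) / (2 * k)!) atTop (𝓝 0) :=
  (FloorSemiring.tendsto_pow_div_factorial_atTop x).comp (tendsto_id.const_mul_atTop' two_pos)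

theorem dist_cos_lt_of_sigmaCos {a b : ℚ} {k m n : ℕ} {ξ : ℝ}
    (hk : (a : ℝ) ^ 2 ≤ (2 * k + 1) * (2 * k + 2))
    (hb : |(b : ℝ) - sigmaCos k a| + (a : ℝ) ^ (2 * k) / (2 * (2 * k)!) + 1 / (m + 1) ≤
      1 / (n + 1))
    (hξ : dist (a : ℝ) ξ < 1 / (m + 1)) :
    dist (b : ℝ) (cos ξ) < 1 / (n + 1) := by
  rw [Real.dist_eq] at hξ ⊢
  calc |(b : ℝ) - cos ξ|
      ≤ |(b : ℝ) - sigmaCos k a| + |cos a - sigmaCos k a| + |cos a - cos ξ| := by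
        have := abs_sub_le (b : ℝ) (sigmaCos k a) (cos a)
        have := abs_sub_le (b : ℝ) (cos a) (cos ξ)
        rw [abs_sub_comm (sigmaCos k a)] at *
        linarith
    _ < |(b : ℝ) - sigmaCos k a| + (a : ℝ) ^ (2 * k) / (2 * (2 * k)!) + 1 / (m + 1) := by
        have : |cos a - sigmaCos k a| ≤ _ := abs_cos_sub_taylor_midpoint_le hk
        have := (abs_cos_sub_cos_le a ξ).trans_lt hξ
        linarith
    _ ≤ 1 / (n + 1) := hb

theorem eventually_sq_le_mul_succ (x : ℝ) :
    ∀ᶠ k : ℕ in atTop, x ^ 2 ≤ (2 * k + 1) * (2 * k + 2) := by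
  have : Tendsto (fun k : ℕ ↦ ((2 * k + 1) * (2 * k + 2) : ℝ)) atTop atTop :=
    tendsto_atTop_mono (fun k ↦ by nlinarith [(k.cast_nonneg : (0 : ℝ) ≤ k)])
      tendsto_natCast_atTop_atTop
  exact this.eventually_ge_atTop _

theorem exists_rat_abs_sub_sigmaCos_add_lt (a : ℚ) {ε : ℝ} (hε : 0 < ε) :
    ∃ (k : ℕ) (b : ℚ), (a : ℝ) ^ 2 ≤ (2 * k + 1) * (2 * k + 2) ∧
      |(b : ℝ) - sigmaCos k a| + (a : ℝ) ^ (2 * k) / (2 * (2 * k)!) < ε := by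
  obtain ⟨k, hk, htail⟩ := ((eventually_sq_le_mul_succ a).and
    ((tendsto_pow_two_mul_div_factorial a).eventually_lt_const hε)).exists
  obtain ⟨b, hb₁, hb₂⟩ :=
    exists_rat_btwn (lt_add_of_pos_right (sigmaCos k a) (half_pos hε))
  refine ⟨k, b, hk, ?_⟩
  rw [abs_of_pos (sub_pos.2 hb₁), div_mul_eq_div_div_swap]
  linarith

theorem cosine_approx_system :
    IsApproxSystem
      (A := Set.range ((↑) : ℚ → ℝ)) (B := Set.range ((↑) : ℚ → ℝ))
      (D := Set.univ) (θ := Real.cos)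
      (⋃ k : ℕ, {q : ℝ × ℕ × ℝ × ℕ | ∃ a b : ℚ,
        q.1 = (a : ℝ) ∧ q.2.2.1 = (b : ℝ) ∧
        (a : ℝ) ^ 2 ≤ (2 * k + 1) * (2 * k + 2) ∧
        |(b : ℝ) - sigmaCos k a| + (a : ℝ) ^ (2 * k) / (2 * (2 * k).factorial) +
          1 / (q.2.1 + 1) ≤ 1 / (q.2.2.2 + 1)}) := by
  refine ⟨?_, fun ξ _ ↦ ⟨?_, fun n ↦ ?_⟩⟩
  · intro p hp
    obtain ⟨k, a, b, ha, hb, -⟩ := Set.mem_iUnion.1 hp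
    exact ⟨⟨a, ha.symm⟩, ⟨b, hb.symm⟩⟩
  · intro _ m _ n hS hξ
    obtain ⟨k, a, b, rfl, rfl, hk, hb⟩ := Set.mem_iUnion.1 hS
    exact dist_cos_lt_of_sigmaCos hk hb hξ
  · have hε : (0 : ℝ) < 1 / (n + 1) / 2 := by positivity
    obtain ⟨m, hm⟩ := exists_nat_one_div_lt hε
    refine ⟨m, ?_⟩
    rintro _ ⟨a, rfl⟩ -
    obtain ⟨k, b, hk, hb⟩ := exists_rat_abs_sub_sigmaCos_add_lt a hε
    exact ⟨b, ⟨b, rfl⟩, Set.mem_iUnion.2 ⟨k, a, b, rfl, rfl, hk, by linarith⟩⟩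
end

section
/- With X = ℝ², d the sup metric, Y = ℝ, D = ℝ × (ℝ \ {0}), and θ(ξ₁,ξ₂) = ξ₁/ξ₂: a quadruple ((a₁,a₂),m,b,n) ∈ ℚ² × ℕ × ℚ × ℕ satisfies the condition 'for all (ξ₁,ξ₂) ∈ D, max(|a₁−ξ₁|,|a₂−ξ₂|) < 1/(m+1) implies |b − ξ₁/ξ₂| < 1/(n+1)' if and only if (m+1)·|a₂| > 1 and the four numbers ((m+1)a₁ ± 1)/((m+1)a₂ ± 1) all belong to the closed interval [b − 1/(n+1), b + 1/(n+1)]. -/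
/-!
If `|a₂| ≤ r`, the closed box of radius `r` about `(a₁, a₂)` meets the line `ξ₂ = 0` while
`ξ₁` stays in an interval of positive length, so `ξ₁ / ξ₂` is unbounded on the open box; hence
`r < |a₂|`. Then `ξ₂` has the sign of `a₂` on the box, so each bound `ξ₁ / ξ₂ < c` is an affine
condition `ξ₁ < c ξ₂` (or its reverse). An affine inequality holds strictly on the open box as soon
as it holds weakly at the four corners; conversely the corners are limits of interior points, so
the quotient takes values in the closed interval there.
-/

open Set Filter Topology

/-- The approximation condition of the paper for `θ(ξ₁, ξ₂) = ξ₁ / ξ₂` with the sup metric,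
where `r = 1 / (m + 1)` and `ε = 1 / (n + 1)`. -/
def DivisionApprox (a₁ a₂ r b ε : ℝ) : Prop :=
  ∀ ξ₁ ξ₂ : ℝ, ξ₂ ≠ 0 → max |a₁ - ξ₁| |a₂ - ξ₂| < r → |b - ξ₁ / ξ₂| < ε

lemma lt_mul_of_abs_sub_lt {a₁ a₂ ξ₁ ξ₂ r c : ℝ} (h₁ : |a₁ - ξ₁| < r) (h₂ : |a₂ - ξ₂| < r)
    (hp : a₁ + r ≤ c * (a₂ + r)) (hm : a₁ + r ≤ c * (a₂ - r)) : ξ₁ < c * ξ₂ := by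
  rw [abs_lt] at h₁ h₂
  rcases le_total 0 c with hc | hc <;> nlinarith

lemma mul_lt_of_abs_sub_lt {a₁ a₂ ξ₁ ξ₂ r c : ℝ} (h₁ : |a₁ - ξ₁| < r) (h₂ : |a₂ - ξ₂| < r)
    (hp : c * (a₂ + r) ≤ a₁ - r) (hm : c * (a₂ - r) ≤ a₁ - r) : c * ξ₂ < ξ₁ := by
  rw [abs_lt] at h₁ h₂
  rcases le_total 0 c with hc | hc <;> nlinarith

namespace DivisionApprox

variable {a₁ a₂ r b ε : ℝ}

theorem lt_abs (hr : 0 < r) (h : DivisionApprox a₁ a₂ r b ε) : r < |a₂| := by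
  by_contra! ha
  have hzero : ∀ ξ₁, |a₁ - ξ₁| < r → ξ₁ = 0 := by
    intro ξ₁ h₁
    have hbound : ∀ t ∈ Ioo 0 r, |ξ₁| ≤ (|b| + ε) * t := by
      rintro t ⟨ht₀, htr⟩
      obtain ⟨ξ₂, hξ₂, h₂⟩ : ∃ ξ₂, |ξ₂| = t ∧ |a₂ - ξ₂| < r := by
        rcases le_total 0 a₂ with h₀ | h₀
        · exact ⟨t, abs_of_pos ht₀, abs_lt.2 ⟨by linarith, by linarith [abs_of_nonneg h₀]⟩⟩
        · exact ⟨-t, by rw [abs_neg, abs_of_pos ht₀],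
            abs_lt.2 ⟨by linarith [abs_of_nonpos h₀], by linarith⟩⟩
      have hξ₂0 : ξ₂ ≠ 0 := by rw [← abs_pos, hξ₂]; exact ht₀
      have hb := h ξ₁ ξ₂ hξ₂0 (max_lt h₁ h₂)
      have : |ξ₁| / t ≤ |b| + ε := by
        rw [← hξ₂, ← abs_div]
        linarith [abs_sub_abs_le_abs_sub (ξ₁ / ξ₂) b, abs_sub_comm (ξ₁ / ξ₂) b]
      rwa [div_le_iff₀ ht₀] at this
    have hlim : Tendsto (fun t => (|b| + ε) * t) (𝓝[>] 0) (𝓝 ((|b| + ε) * 0)) :=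
      ((continuous_const_mul _).tendsto 0).mono_left nhdsWithin_le_nhds
    have := ge_of_tendsto hlim (eventually_of_mem (Ioo_mem_nhdsGT hr) hbound)
    rwa [mul_zero, abs_nonpos_iff] at this
  have hplus := hzero (a₁ + r / 2)
    (by rw [sub_add_cancel_left, abs_neg, abs_of_pos (by positivity)]; linarith)
  have hminus := hzero (a₁ - r / 2) (by rw [sub_sub_cancel, abs_of_pos (by positivity)]; linarith)
  linarith

theorem abs_sub_div_le (hr : 0 < r) (ha : r < |a₂|) (h : DivisionApprox a₁ a₂ r b ε)
    {η₁ η₂ : ℝ} (hη : max |a₁ - η₁| |a₂ - η₂| ≤ r) : |b - η₁ / η₂| ≤ ε := by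
  have hne : ∀ ξ₂, |a₂ - ξ₂| ≤ r → ξ₂ ≠ 0 := by
    rintro ξ₂ h₂ rfl
    rw [sub_zero] at h₂
    linarith
  have hshrink : ∀ s ∈ Ioo (0 : ℝ) 1, ∀ x y, |x - y| ≤ r → |x - (x + s * (y - x))| < r := by
    rintro s ⟨hs₀, hs₁⟩ x y hxy
    rw [sub_add_cancel_left, abs_neg, abs_mul, abs_of_pos hs₀, abs_sub_comm]
    nlinarith [abs_nonneg (x - y)]
  let f : ℝ → ℝ := fun s => |b - (a₁ + s * (η₁ - a₁)) / (a₂ + s * (η₂ - a₂))|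
  have hf : ContinuousAt f 1 := by
    have : a₂ + 1 * (η₂ - a₂) ≠ 0 := by
      rw [one_mul, add_sub_cancel]; exact hne _ ((le_max_right _ _).trans hη)
    fun_prop (disch := exact this)
  have hfε : ∀ᶠ s in 𝓝[<] 1, f s ≤ ε := by
    filter_upwards [Ioo_mem_nhdsLT one_pos] with s hs
    have h₁ := hshrink s hs _ _ ((le_max_left _ _).trans hη)
    have h₂ := hshrink s hs _ _ ((le_max_right _ _).trans hη)
    exact (h _ _ (hne _ h₂.le) (max_lt h₁ h₂)).le
  simpa [f] using le_of_tendsto (hf.tendsto.mono_left nhdsWithin_le_nhds) hfε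

theorem of_corners (ha : r < |a₂|)
    (hpp : (a₁ + r) / (a₂ + r) ∈ Icc (b - ε) (b + ε))
    (hpm : (a₁ + r) / (a₂ - r) ∈ Icc (b - ε) (b + ε))
    (hmp : (a₁ - r) / (a₂ + r) ∈ Icc (b - ε) (b + ε))
    (hmm : (a₁ - r) / (a₂ - r) ∈ Icc (b - ε) (b + ε)) :
    DivisionApprox a₁ a₂ r b ε := by
  intro ξ₁ ξ₂ _ hξ
  have h₁ : |a₁ - ξ₁| < r := (le_max_left _ _).trans_lt hξ
  have h₂ : |a₂ - ξ₂| < r := (le_max_right _ _).trans_lt hξ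
  have h₂' := abs_lt.1 h₂
  suffices b - ε < ξ₁ / ξ₂ ∧ ξ₁ / ξ₂ < b + ε by
    rw [abs_sub_lt_iff]; constructor <;> linarith
  rcases _root_.lt_abs.1 ha with ha | ha
  · have hξ₂ : 0 < ξ₂ := by linarith
    have hp : 0 < a₂ + r := by linarith
    have hm : 0 < a₂ - r := by linarith
    rw [lt_div_iff₀ hξ₂, div_lt_iff₀ hξ₂]
    exact ⟨mul_lt_of_abs_sub_lt h₁ h₂ ((le_div_iff₀ hp).1 hmp.1) ((le_div_iff₀ hm).1 hmm.1),
      lt_mul_of_abs_sub_lt h₁ h₂ ((div_le_iff₀ hp).1 hpp.2) ((div_le_iff₀ hm).1 hpm.2)⟩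
  · have hξ₂ : ξ₂ < 0 := by linarith
    have hp : a₂ + r < 0 := by linarith
    have hm : a₂ - r < 0 := by linarith
    rw [lt_div_iff_of_neg hξ₂, div_lt_iff_of_neg hξ₂]
    exact ⟨lt_mul_of_abs_sub_lt h₁ h₂ ((le_div_iff_of_neg hp).1 hpp.1)
        ((le_div_iff_of_neg hm).1 hpm.1),
      mul_lt_of_abs_sub_lt h₁ h₂ ((div_le_iff_of_neg hp).1 hmp.2) ((div_le_iff_of_neg hm).1 hmm.2)⟩

theorem iff_corners (hr : 0 < r) :
    DivisionApprox a₁ a₂ r b ε ↔ r < |a₂| ∧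
      (a₁ + r) / (a₂ + r) ∈ Icc (b - ε) (b + ε) ∧ (a₁ + r) / (a₂ - r) ∈ Icc (b - ε) (b + ε) ∧
      (a₁ - r) / (a₂ + r) ∈ Icc (b - ε) (b + ε) ∧ (a₁ - r) / (a₂ - r) ∈ Icc (b - ε) (b + ε) := by
  refine ⟨fun h => ?_, fun ⟨ha, hpp, hpm, hmp, hmm⟩ => of_corners ha hpp hpm hmp hmm⟩
  have ha := h.lt_abs hr
  have hcorner : ∀ η₁ η₂, |a₁ - η₁| = r → |a₂ - η₂| = r → η₁ / η₂ ∈ Icc (b - ε) (b + ε) :=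
    fun η₁ η₂ h₁ h₂ => mem_Icc_iff_abs_le.1 (h.abs_sub_div_le hr ha (by rw [h₁, h₂, max_self]))
  refine ⟨ha, hcorner _ _ ?_ ?_, hcorner _ _ ?_ ?_, hcorner _ _ ?_ ?_, hcorner _ _ ?_ ?_⟩ <;>
    simp [abs_of_pos hr]

end DivisionApprox

theorem division_maximal_system_characterization
    (a₁ a₂ b : ℚ) (m n : ℕ) :
    (∀ ξ₁ ξ₂ : ℝ, ξ₂ ≠ 0 →
        max |(a₁ : ℝ) - ξ₁| |(a₂ : ℝ) - ξ₂| < 1 / (m + 1) →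
        |(b : ℝ) - ξ₁ / ξ₂| < 1 / (n + 1)) ↔
      (((m : ℝ) + 1) * |(a₂ : ℝ)| > 1 ∧
        (((m : ℝ) + 1) * a₁ + 1) / (((m : ℝ) + 1) * a₂ + 1) ∈
          Set.Icc ((b : ℝ) - 1 / (n + 1)) ((b : ℝ) + 1 / (n + 1)) ∧
        (((m : ℝ) + 1) * a₁ + 1) / (((m : ℝ) + 1) * a₂ - 1) ∈
          Set.Icc ((b : ℝ) - 1 / (n + 1)) ((b : ℝ) + 1 / (n + 1)) ∧
        (((m : ℝ) + 1) * a₁ - 1) / (((m : ℝ) + 1) * a₂ + 1) ∈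
          Set.Icc ((b : ℝ) - 1 / (n + 1)) ((b : ℝ) + 1 / (n + 1)) ∧
        (((m : ℝ) + 1) * a₁ - 1) / (((m : ℝ) + 1) * a₂ - 1) ∈
          Set.Icc ((b : ℝ) - 1 / (n + 1)) ((b : ℝ) + 1 / (n + 1))) := by
  have hM : (0 : ℝ) < m + 1 := by positivity
  refine (DivisionApprox.iff_corners (one_div_pos.2 hM)).trans ?_
  -- `(a₁ ± 1/M) / (a₂ ± 1/M) = (M a₁ ± 1) / (M a₂ ± 1)` after clearing the common factor `1/M`
  simp only [add_div' _ _ _ hM.ne', sub_div' hM.ne', div_div_div_cancel_right₀ hM.ne',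
    mul_comm _ ((m : ℝ) + 1), gt_iff_lt, div_lt_iff₀' hM]
end

section
/- Let θ : D → ℝ with D ⊆ ℝ, θ the restriction of the constant zero function to D, where ℕ ⊆ ℝ is viewed with the usual metric, A = B = ℕ (as a subset of itself with the discrete-induced metric |a−b|), X = Y = ℕ. Let M be the maximal A,B-approximation system for θ, i.e., the set of (a,m,b,n) ∈ ℕ⁴ such that for all ξ ∈ D, |a−ξ| < 1/(m+1) implies |b−θ(ξ)| < 1/(n+1). Then for every a ∈ ℕ: (a,0,1,0) ∈ M if and only if a ∉ D. -/
theorem Nat.abs_cast_sub_cast_lt_one_iff {a b : ℕ} : |(a : ℝ) - b| < 1 ↔ a = b := by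
  refine ⟨fun h => ?_, fun h => by simp [h]⟩
  by_contra hab
  have h1 : (1 : ℝ) ≤ Dist.dist (a : ℝ) b := Nat.pairwise_one_le_dist hab
  exact (Real.dist_eq _ _ ▸ h1).not_gt h

theorem nat_maximal_system_not_re (D : Set ℕ)
    (M : Set (ℕ × ℕ × ℕ × ℕ))
    (hM : M = {q : ℕ × ℕ × ℕ × ℕ | ∀ ξ ∈ D,
      |(q.1 : ℝ) - (ξ : ℝ)| < 1 / (q.2.1 + 1) →
        |(q.2.2.1 : ℝ) - 0| < 1 / (q.2.2.2 + 1)}) :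
    ∀ a : ℕ, (a, 0, 1, 0) ∈ M ↔ a ∉ D := by
  intro a
  subst hM
  simp only [Set.mem_ofPred_eq, Nat.cast_zero, Nat.cast_one, zero_add, div_one, sub_zero, abs_one,
    lt_irrefl, imp_false, Nat.abs_cast_sub_cast_lt_one_iff]
  exact ⟨fun h ha => h a ha rfl, fun h ξ hξ hξa => h (hξa ▸ hξ)⟩
end
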